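/- arXiv:1405.4788 — 4 statements merged into one kernel-verified Lean document; each statement's English description precedes it below -/
import Mathlib

section
/- Let n ≥ 2 and let A_1, A_2, …, A_n be nonempty finite sets of non-negative integers (the set-labels of the vertices of the complete graph K_n). Then |A_i + A_j| = |A_i| · |A_j| holds for every pair of distinct indices i ≠ j (i.e., the labeling is a strong labeling of K_n) if and only if the difference sets D_{A_1}, D_{A_2}, …, D_{A_n} are pairwise disjoint. -/
/-!
`|A + B| = |A| |B|` exactly when `(a, b) ↦ a + b` is injective on `A × B`, and a coincidence
`a + b' = a' + b` with `a ≠ a'` is the same thing as a common difference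
`a - a' = b - b' ∈ D_A ∩ D_B`.
-/

open Pointwise

/-- The difference set of a finite set `X` of non-negative integers:
all differences `x - y` (in `ℤ`) of distinct elements `x, y ∈ X`. -/
def diffSet (X : Finset ℕ) : Set ℤ :=
  {d : ℤ | ∃ x ∈ X, ∃ y ∈ X, x ≠ y ∧ d = (x : ℤ) - (y : ℤ)}

theorem injOn_add_product_iff_disjoint_diffSet (A B : Finset ℕ) :
    (A ×ˢ B : Set (ℕ × ℕ)).InjOn (fun p => p.1 + p.2) ↔ Disjoint (diffSet A) (diffSet B) := by
  rw [Set.disjoint_left]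
  constructor
  · rintro hinj _ ⟨a, ha, a', ha', hne, rfl⟩ ⟨b, hb, b', hb', -, hdiff⟩
    have hsum : a + b' = a' + b := by omega
    exact hne (Prod.ext_iff.mp (hinj (Set.mk_mem_prod ha hb') (Set.mk_mem_prod ha' hb) hsum)).1
  · rintro hdisj ⟨a, b⟩ ⟨ha, hb⟩ ⟨a', b'⟩ ⟨ha', hb'⟩ (hsum : a + b = a' + b')
    by_contra hne
    have hna : a ≠ a' := fun h => hne (Prod.ext h (by omega))
    exact hdisj ⟨a, ha, a', ha', hna, rfl⟩ ⟨b', hb', b, hb, by omega, by omega⟩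

theorem card_add_eq_mul_iff_disjoint_diffSet (A B : Finset ℕ) :
    (A + B).card = A.card * B.card ↔ Disjoint (diffSet A) (diffSet B) :=
  Finset.card_add_iff.trans (injOn_add_product_iff_disjoint_diffSet A B)

theorem strong_labeling_completeGraph_iff_pairwise_disjoint_diffSets_general
    (n : ℕ) (A : Fin n → Finset ℕ) :
    (∀ i j : Fin n, i ≠ j → (A i + A j).card = (A i).card * (A j).card) ↔
      (∀ i j : Fin n, i ≠ j → diffSet (A i) ∩ diffSet (A j) = ∅) := by
  simp only [card_add_eq_mul_iff_disjoint_diffSet, Set.disjoint_iff_inter_eq_empty]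

/-- For nonempty set-labels `A 1, …, A n` (`n ≥ 2`) of the vertices of the complete
graph `K n`, the labeling is strong (i.e. `|A i + A j| = |A i| ⬝ |A j|` for all `i ≠ j`)
iff the difference sets of the `A i` are pairwise disjoint. -/
theorem strong_labeling_completeGraph_iff_pairwise_disjoint_diffSets
    (n : ℕ) (hn : 2 ≤ n) (A : Fin n → Finset ℕ) (hA : ∀ i, (A i).Nonempty) :
    (∀ i j : Fin n, i ≠ j → (A i + A j).card = (A i).card * (A j).card) ↔
      (∀ i j : Fin n, i ≠ j → diffSet (A i) ∩ diffSet (A j) = ∅) :=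
  strong_labeling_completeGraph_iff_pairwise_disjoint_diffSets_general n A
end

section
/- Let f be a strong integer additive set-indexer of the complete graph K_n on n ≥ 2 vertices. Then for any two distinct vertices u and v of K_n, the difference sets D_{f(u)} and D_{f(v)} of their set-labels are disjoint. Consequently, the difference sets of the set-labels of all n vertices of K_n are pairwise disjoint. -/
open Pointwise

/-- `f` is an integer additive set-indexer (IASI) of `G`: an injective assignment
of nonempty finite sets of non-negative integers to the vertices such that the
induced edge function `uv ↦ f u + f v` (sumset) is injective on the edges. -/
def IsIASI {V : Type*} (G : SimpleGraph V) (f : V → Finset ℕ) : Prop :=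
  (∀ v, (f v).Nonempty) ∧ Function.Injective f ∧
    ∀ u v u' v' : V, G.Adj u v → G.Adj u' v' →
      f u + f v = f u' + f v' → s(u, v) = s(u', v')

/-- `f` is a strong IASI of `G`: an IASI with `|f u + f v| = |f u| ⬝ |f v|`
for every edge `uv`. -/
def IsStrongIASI {V : Type*} (G : SimpleGraph V) (f : V → Finset ℕ) : Prop :=
  IsIASI G f ∧ ∀ u v : V, G.Adj u v → (f u + f v).card = (f u).card * (f v).card

-- The cardinality condition says that `(a, b) ↦ a + b` is injective on `A ×ˢ B`, while a common
-- difference `x - x' = y - y'` gives two representations `x + y' = x' + y` of one element of `A + B`.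
theorem diffSet_inter_diffSet_eq_empty_of_card_add {A B : Finset ℕ}
    (h : (A + B).card = A.card * B.card) : diffSet A ∩ diffSet B = ∅ := by
  rw [Finset.card_add_iff] at h
  refine Set.eq_empty_iff_forall_notMem.mpr ?_
  rintro _ ⟨⟨x, hx, x', hx', hxx', rfl⟩, ⟨y, hy, y', hy', -, hd⟩⟩
  have hsum : x + y' = x' + y := by omega
  exact hxx' (congrArg Prod.fst (h (Set.mk_mem_prod hx hy') (Set.mk_mem_prod hx' hy) hsum))

theorem strongIASI_completeGraph_diffSets_pairwise_disjoint_general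
    (n : ℕ) (f : Fin n → Finset ℕ)
    (hf : IsStrongIASI (⊤ : SimpleGraph (Fin n)) f) :
    ∀ u v : Fin n, u ≠ v → diffSet (f u) ∩ diffSet (f v) = ∅ :=
  fun u v huv => diffSet_inter_diffSet_eq_empty_of_card_add (hf.2 u v huv)

/-- If `f` is a strong IASI of the complete graph `K n` (`n ≥ 2`), then the
difference sets of the set-labels of any two distinct vertices are disjoint;
i.e. the difference sets of the set-labels of all vertices are pairwise disjoint. -/
theorem strongIASI_completeGraph_diffSets_pairwise_disjoint
    (n : ℕ) (hn : 2 ≤ n) (f : Fin n → Finset ℕ)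
    (hf : IsStrongIASI (⊤ : SimpleGraph (Fin n)) f) :
    ∀ u v : Fin n, u ≠ v → diffSet (f u) ∩ diffSet (f v) = ∅ :=
  strongIASI_completeGraph_diffSets_pairwise_disjoint_general n f hf
end

section
/- Let C_n be the cycle on n ≥ 3 vertices and let r ≥ 1 be an integer. Then the clique number of the r-th power of C_n is ω(C_n^r) = r + 1 if r < ⌊n/2⌋, and ω(C_n^r) = n if r ≥ ⌊n/2⌋. -/
/-- The `r`-th power of a simple graph `G`: two distinct vertices are adjacent
iff their distance in `G` is at most `r` (in particular they are connected in `G`). -/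
def SimpleGraph.power {V : Type*} (G : SimpleGraph V) (r : ℕ) : SimpleGraph V :=
  SimpleGraph.fromRel (fun u v => G.Reachable u v ∧ G.dist u v ≤ r)

/-!
In `C_n` the distance between `u` and `v` is the cyclic distance `min (v - u) (u - v)`, so a clique
of `C_n^r` is a set of residues mod `n` with pairwise cyclic distances at most `r`. If `2r < n`
take such a set `S`, let `δ ≤ r` be its largest cyclic distance, attained at `x` and `y = x + δ`.
Being within `δ` of both `x` and `y` forces every `u ∈ S` into `x + {0, …, 2δ}`, and no two
offsets there differ by `δ + 1` (that would be a cyclic distance `δ + 1`, as `2δ + 2 ≤ n`).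
Folding `{0, …, 2δ}` onto `{0, …, δ}` by `t ↦ t - (δ + 1)` for `t > δ` is then injective on
the offsets, so `|S| ≤ δ + 1 ≤ r + 1`; the arc `{0, …, r}` attains this. If `2r ≥ n` every
cyclic distance is at most `⌊n/2⌋ ≤ r`, so `C_n^r` is complete.
-/

open Finset SimpleGraph

theorem Finset.card_le_of_forall_le_two_mul_of_add_notMem {T : Finset ℕ} {d : ℕ}
    (hT : ∀ t ∈ T, t ≤ 2 * d) (hgap : ∀ t ∈ T, t + (d + 1) ∉ T) : #T ≤ d + 1 := by
  let fold : ℕ → ℕ := fun t => if t ≤ d then t else t - (d + 1)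
  calc #T ≤ #(range (d + 1)) := by
        refine card_le_card_of_injOn fold (fun t ht => ?_) (fun t ht t' ht' heq => ?_)
        · have := hT t ht
          simp only [coe_range, Set.mem_Iio, fold]
          split_ifs <;> omega
        · simp only [fold] at heq
          split_ifs at heq
          · exact heq
          · exact absurd (show t + (d + 1) = t' by omega ▸ ht') (hgap t ht)
          · exact absurd (show t' + (d + 1) = t by omega ▸ ht) (hgap t' ht')
          · omega
    _ = d + 1 := card_range _

namespace Fin

variable {n : ℕ}

theorem val_sub_add_val_eq_or (a b : Fin n) :
    (a - b).val + b.val = a.val ∨ (a - b).val + b.val = a.val + n := by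
  rcases le_or_gt b a with h | h
  · exact .inl (by rw [sub_val_of_le h]; exact Nat.sub_add_cancel h)
  · exact .inr (by rw [coe_sub_iff_lt.2 h]; have := a.isLt; omega)

def cyclicDist (u v : Fin n) : ℕ := min (v - u).val (u - v).val

theorem cyclicDist_self (u : Fin n) : cyclicDist u u = 0 := by
  have := val_sub_add_val_eq_or u u
  have := (u - u).isLt
  unfold cyclicDist
  omega

theorem cyclicDist_le_half (u v : Fin n) : cyclicDist u v ≤ n / 2 := by
  have := val_sub_add_val_eq_or u v
  have := val_sub_add_val_eq_or v u
  have := (u - v).isLt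
  have := (v - u).isLt
  unfold cyclicDist
  omega

theorem cyclicDist_triangle (u v w : Fin n) :
    cyclicDist u w ≤ cyclicDist u v + cyclicDist v w := by
  have := val_sub_add_val_eq_or u v
  have := val_sub_add_val_eq_or v u
  have := val_sub_add_val_eq_or u w
  have := val_sub_add_val_eq_or w u
  have := val_sub_add_val_eq_or v w
  have := val_sub_add_val_eq_or w v
  have := u.isLt
  have := v.isLt
  have := w.isLt
  unfold cyclicDist
  omega

theorem cyclicDist_le_of_val_le {u v : Fin n} {r : ℕ} (hu : u.val ≤ r) (hv : v.val ≤ r) :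
    cyclicDist u v ≤ r := by
  have := val_sub_add_val_eq_or u v
  have := val_sub_add_val_eq_or v u
  unfold cyclicDist
  omega

theorem card_le_of_cyclicDist_le_of_val_sub_eq {s : Finset (Fin n)} {δ : ℕ}
    (hn : 2 * δ + 2 ≤ n) (hs : ∀ u ∈ s, ∀ v ∈ s, cyclicDist u v ≤ δ) {x y : Fin n}
    (hx : x ∈ s) (hy : y ∈ s) (hxy : (y - x).val = δ) : #s ≤ δ + 1 := by
  have hoffset_le : ∀ u ∈ s, (u - x).val ≤ 2 * δ := by
    intro u hu
    have := hs x hx u hu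
    have := hs y hy u hu
    have := val_sub_add_val_eq_or u x
    have := val_sub_add_val_eq_or x u
    have := val_sub_add_val_eq_or u y
    have := val_sub_add_val_eq_or y u
    have := val_sub_add_val_eq_or y x
    have := (u - x).isLt
    unfold cyclicDist at *
    omega
  have hgap : ∀ u ∈ s, ∀ v ∈ s, (v - x).val ≠ (u - x).val + (δ + 1) := by
    intro u hu v hv h
    have := hs u hu v hv
    have := val_sub_add_val_eq_or u x
    have := val_sub_add_val_eq_or v x
    have := val_sub_add_val_eq_or u v
    have := val_sub_add_val_eq_or v u
    have := (u - v).isLt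
    have := (v - u).isLt
    unfold cyclicDist at *
    omega
  have : NeZero n := ⟨by omega⟩
  have hinj : Set.InjOn (fun u => (u - x).val) s := fun u _ v _ h =>
    sub_left_injective (b := x) (Fin.ext h)
  rw [← card_image_of_injOn hinj]
  refine Finset.card_le_of_forall_le_two_mul_of_add_notMem ?_ ?_
  · simpa using hoffset_le
  · simp only [mem_image, not_exists, not_and, forall_exists_index, and_imp,
      forall_apply_eq_imp_iff₂]
    exact hgap

theorem card_le_of_cyclicDist_le {s : Finset (Fin n)} {r : ℕ} (hn : 2 * r + 2 ≤ n)
    (hs : ∀ u ∈ s, ∀ v ∈ s, cyclicDist u v ≤ r) : #s ≤ r + 1 := by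
  obtain rfl | hne := s.eq_empty_or_nonempty
  · simp
  obtain ⟨⟨a, b⟩, hab, hmax⟩ := (s ×ˢ s).exists_max_image (fun p => cyclicDist p.1 p.2)
    (hne.product hne)
  rw [mem_product] at hab
  set δ := cyclicDist a b
  have hδ : δ ≤ r := hs a hab.1 b hab.2
  have hsδ : ∀ u ∈ s, ∀ v ∈ s, cyclicDist u v ≤ δ := fun u hu v hv =>
    hmax (u, v) (mem_product.2 ⟨hu, hv⟩)
  suffices #s ≤ δ + 1 by omega
  rcases min_choice (b - a).val (a - b).val with h | h
  · exact card_le_of_cyclicDist_le_of_val_sub_eq (by omega) hsδ hab.1 hab.2 h.symm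
  · exact card_le_of_cyclicDist_le_of_val_sub_eq (by omega) hsδ hab.2 hab.1 h.symm

end Fin

namespace SimpleGraph

open Fin

variable {V : Type*} {G : SimpleGraph V}

theorem Preconnected.power_adj_iff (hG : G.Preconnected) {r : ℕ} {u v : V} :
    (G.power r).Adj u v ↔ u ≠ v ∧ G.dist u v ≤ r := by
  simp only [power, fromRel_adj, dist_comm (u := v), hG u v, hG v u, true_and, or_self]

theorem cliqueNum_eq_of_isNClique [Finite V] {k : ℕ} {s : Finset V} (hs : G.IsNClique k s)
    (hle : ∀ t : Finset V, G.IsClique (t : Set V) → #t ≤ k) : G.cliqueNum = k := by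
  obtain ⟨t, ht⟩ := G.exists_isNClique_cliqueNum
  refine le_antisymm (ht.card_eq ▸ hle t ht.isClique) ?_
  exact hs.card_eq ▸ hs.isClique.card_le_cliqueNum

variable {n : ℕ}

theorem cycleGraph_adj_iff_cyclicDist_eq_one {u v : Fin n} :
    (cycleGraph n).Adj u v ↔ cyclicDist u v = 1 := by
  have := val_sub_add_val_eq_or u v
  have := val_sub_add_val_eq_or v u
  rw [cycleGraph_adj', cyclicDist]
  constructor
  · intro h
    have hne : u.val ≠ v.val := fun h' => by
      have := (u - v).isLt
      omega
    omega
  · omega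

theorem cyclicDist_le_length {u v : Fin n} (p : (cycleGraph n).Walk u v) :
    cyclicDist u v ≤ p.length := by
  induction p with
  | nil => simp [cyclicDist_self]
  | @cons u v w h p ih =>
    calc cyclicDist u w ≤ cyclicDist u v + cyclicDist v w := cyclicDist_triangle u v w
      _ ≤ 1 + p.length := by rw [cycleGraph_adj_iff_cyclicDist_eq_one.1 h]; omega
      _ = (p.cons h).length := by rw [Walk.length_cons, add_comm]

open Fin.NatCast Fin.CommRing in
theorem cycleGraph_dist_add_natCast_le {m : ℕ} (u : Fin (m + 2)) (k : ℕ) :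
    (cycleGraph (m + 2)).dist u (u + k) ≤ k := by
  induction k with
  | zero => simp
  | succ k ih =>
    have hadj : (cycleGraph (m + 2)).Adj (u + k) (u + (k + 1 : ℕ)) := by
      rw [cycleGraph_adj]
      right
      push_cast
      ring
    calc (cycleGraph (m + 2)).dist u (u + (k + 1 : ℕ))
        ≤ (cycleGraph (m + 2)).dist u (u + k) +
            (cycleGraph (m + 2)).dist (u + k) (u + (k + 1 : ℕ)) :=
          cycleGraph_connected.dist_triangle
      _ ≤ k + 1 := by rw [dist_eq_one_iff_adj.2 hadj]; omega

open Fin.NatCast in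
theorem cycleGraph_dist (u v : Fin n) : (cycleGraph n).dist u v = cyclicDist u v := by
  refine le_antisymm ?_ ?_
  · obtain _ | _ | m := n
    · exact u.elim0
    · simp [Fin.fin_one_eq_zero u, Fin.fin_one_eq_zero v]
    · refine le_min ?_ ?_
      · simpa using cycleGraph_dist_add_natCast_le u (v - u).val
      · simpa [dist_comm] using cycleGraph_dist_add_natCast_le v (u - v).val
  · obtain ⟨p, hp⟩ := cycleGraph_preconnected u v |>.exists_walk_length_eq_dist
    exact hp ▸ cyclicDist_le_length p

theorem isClique_cycleGraph_power_iff {r : ℕ} {s : Set (Fin n)} :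
    ((cycleGraph n).power r).IsClique s ↔ ∀ u ∈ s, ∀ v ∈ s, cyclicDist u v ≤ r := by
  simp only [IsClique, Set.Pairwise, cycleGraph_preconnected.power_adj_iff, cycleGraph_dist]
  refine ⟨fun h u hu v hv => ?_, fun h u hu v hv huv => ⟨huv, h u hu v hv⟩⟩
  obtain rfl | huv := eq_or_ne u v
  · simp [cyclicDist_self]
  · exact (h hu hv huv).2

end SimpleGraph

theorem cliqueNum_power_cycleGraph_general (n r : ℕ) :
    (r < n / 2 → ((SimpleGraph.cycleGraph n).power r).cliqueNum = r + 1) ∧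
      (n / 2 ≤ r → ((SimpleGraph.cycleGraph n).power r).cliqueNum = n) := by
  refine ⟨fun hrn => ?_, fun hrn => ?_⟩
  · have harc : ((cycleGraph n).power r).IsNClique (r + 1)
        (univ.map (Fin.castLEEmb (by omega : r + 1 ≤ n))) := by
      refine ⟨isClique_cycleGraph_power_iff.2 ?_, by simp⟩
      simp only [coe_map, Set.mem_image, mem_coe, mem_univ, true_and, forall_exists_index,
        forall_apply_eq_imp_iff]
      exact fun i j => Fin.cyclicDist_le_of_val_le (by simpa using i.is_le) (by simpa using j.is_le)
    exact cliqueNum_eq_of_isNClique harc fun t ht =>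
      Fin.card_le_of_cyclicDist_le (by omega) (isClique_cycleGraph_power_iff.1 ht)
  · have hcomplete : ((cycleGraph n).power r).IsNClique n (univ : Finset (Fin n)) :=
      ⟨isClique_cycleGraph_power_iff.2 fun u _ v _ => (Fin.cyclicDist_le_half u v).trans hrn,
        by simp⟩
    exact cliqueNum_eq_of_isNClique hcomplete fun t _ => (card_le_univ t).trans (by simp)

/-- For the cycle `C_n` (`n ≥ 3`) and `r ≥ 1`, the clique number of `C_n^r`
is `r + 1` if `r < ⌊n/2⌋`, and `n` if `r ≥ ⌊n/2⌋`. -/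
theorem cliqueNum_power_cycleGraph (n r : ℕ) (hn : 3 ≤ n) (hr : 1 ≤ r) :
    (r < n / 2 → ((SimpleGraph.cycleGraph n).power r).cliqueNum = r + 1) ∧
      (n / 2 ≤ r → ((SimpleGraph.cycleGraph n).power r).cliqueNum = n) :=
  cliqueNum_power_cycleGraph_general n r
end

section
/- Let G be the n-sunlet graph on 2n vertices, with n ≥ 4: a cycle v_1, …, v_n (v_i adjacent to v_{i+1}, indices modulo n) together with pendant vertices w_1, …, w_n, where w_i is adjacent only to v_i. Then for every integer r with 1 ≤ r < ⌊n/2⌋, the clique number of the r-th power is ω(G^r) = 2r; and for every integer r ≥ ⌊n/2⌋ + 2, G^r is the complete graph on 2n vertices, so ω(G^r) = 2n. -/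
/-- The `n`-sunlet graph on `2n` vertices: a cycle on the vertices `Sum.inl i`
(`v_i` adjacent to `v_{i+1}`, indices mod `n`) together with pendant vertices
`Sum.inr i`, where `w_i` is adjacent only to `v_i`. -/
def sunletGraph (n : ℕ) : SimpleGraph (ZMod n ⊕ ZMod n) :=
  SimpleGraph.fromRel (fun a b =>
    match a, b with
    | Sum.inl i, Sum.inl j => j = i + 1
    | Sum.inr i, Sum.inl j => j = i
    | _, _ => False)

/-!
Distances in the sunlet graph are explicit: two distinct vertices are at distance
(cyclic distance of their feet on the cycle) + (number of them that are pendants). A set of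
positions on the `n`-cycle with pairwise cyclic distance at most `d`, where `2d + 2 ≤ n`, has at
most `d + 1` elements. Hence a clique of `G^r` with `2r + 2 ≤ n` contains at most `r + 1` cycle
vertices and at most `r - 1` pendants, and `v_0, …, v_r, w_1, …, w_{r-1}` is a clique of size `2r`.
For `r ≥ ⌊n/2⌋ + 2` every distance is at most `⌊n/2⌋ + 2 ≤ r`.
-/

namespace ZMod

variable {n : ℕ}

def cycleDist (i j : ZMod n) : ℕ := (j - i).valMinAbs.natAbs

@[simp] lemma cycleDist_self (i : ZMod n) : cycleDist i i = 0 := by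
  simp [cycleDist]

lemma cycleDist_comm (i j : ZMod n) : cycleDist i j = cycleDist j i := by
  rw [cycleDist, cycleDist, ← natAbs_valMinAbs_neg, neg_sub]

lemma cycleDist_eq_zero {i j : ZMod n} : cycleDist i j = 0 ↔ i = j := by
  rw [cycleDist, Int.natAbs_eq_zero, valMinAbs_eq_zero, sub_eq_zero, eq_comm]

lemma cycleDist_triangle (i j k : ZMod n) : cycleDist i k ≤ cycleDist i j + cycleDist j k := by
  rw [cycleDist, show k - i = (j - i) + (k - j) by ring]
  exact (natAbs_valMinAbs_add_le _ _).trans (Int.natAbs_add_le _ _)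

lemma cycleDist_le_half [NeZero n] (i j : ZMod n) : cycleDist i j ≤ n / 2 :=
  natAbs_valMinAbs_le _

lemma cycleDist_le_natAbs [NeZero n] {i j : ZMod n} {k : ℤ} (h : j - i = k) :
    cycleDist i j ≤ k.natAbs :=
  natAbs_min_of_le_div_two n _ _ (by rw [coe_valMinAbs, h]) (natAbs_valMinAbs_le _)

lemma cycleDist_self_add_one_le [NeZero n] (i : ZMod n) : cycleDist i (i + 1) ≤ 1 :=
  cycleDist_le_natAbs (k := 1) (by simp)

lemma cycleDist_eq_of_sub_eq_natCast {i j : ZMod n} {m : ℕ} (h : j - i = m) (hm : m ≤ n / 2) :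
    cycleDist i j = m := by
  rw [cycleDist, h, valMinAbs_natCast_of_le_half hm, Int.natAbs_natCast]

/-- Offsets from a base point `x` lie in `[-d, d]`; folding the negative ones up by `d + 1` is
injective, because two offsets differing by exactly `d + 1` are `d + 1 > d` apart on the cycle. -/
theorem card_le_of_pairwise_cycleDist_le [NeZero n] {d : ℕ} (hd : 2 * d + 2 ≤ n)
    {S : Finset (ZMod n)} (hS : (S : Set (ZMod n)).Pairwise fun i j => cycleDist i j ≤ d) :
    S.card ≤ d + 1 := by
  rcases S.eq_empty_or_nonempty with rfl | ⟨x, hx⟩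
  · simp
  have hoffset : ∀ y ∈ S, ((y - x).valMinAbs).natAbs ≤ d := fun y hy => by
    rcases eq_or_ne x y with rfl | hxy
    · simp
    · exact hS hx hy hxy
  have hfar : ∀ y ∈ S, ∀ z ∈ S, (y - x).valMinAbs ≠ (z - x).valMinAbs + (d + 1) := by
    intro y hy z hz h
    have hyz : y - z = ((d + 1 : ℕ) : ZMod n) := by
      rw [← sub_sub_sub_cancel_right y z x, ← coe_valMinAbs (y - x), ← coe_valMinAbs (z - x), h]
      push_cast
      ring
    have hdist := cycleDist_eq_of_sub_eq_natCast hyz (by omega)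
    rcases eq_or_ne z y with rfl | hne
    · simp at hdist
    · have := hS hz hy hne
      simp only at this
      omega
  let fold : ZMod n → ℤ := fun y =>
    if 0 ≤ (y - x).valMinAbs then (y - x).valMinAbs else (y - x).valMinAbs + (d + 1)
  calc S.card ≤ (Finset.Ico (0 : ℤ) (d + 1)).card := by
        refine Finset.card_le_card_of_injOn fold (fun y hy => ?_) (fun y hy z hz h => ?_)
        · have := hoffset y hy
          simp only [fold, Finset.coe_Ico, Set.mem_Ico]
          split_ifs <;> omega
        · simp only [fold] at h
          split_ifs at h
          · exact sub_left_inj.mp (valMinAbs_inj.mp h)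
          · exact absurd h (hfar y hy z hz)
          · exact absurd h.symm (hfar z hz y hy)
          · exact sub_left_inj.mp <| valMinAbs_inj.mp <|
              show (y - x).valMinAbs = (z - x).valMinAbs by omega
    _ = d + 1 := by simp

end ZMod

namespace SimpleGraph

variable {V : Type*} {G : SimpleGraph V}

lemma power_adj {r : ℕ} {u v : V} :
    (G.power r).Adj u v ↔ u ≠ v ∧ G.Reachable u v ∧ G.dist u v ≤ r := by
  rw [power, fromRel_adj, dist_comm, reachable_comm, or_self]

lemma Connected.power_adj (hG : G.Connected) {r : ℕ} {u v : V} :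
    (G.power r).Adj u v ↔ u ≠ v ∧ G.dist u v ≤ r := by
  simp [SimpleGraph.power_adj, hG.preconnected u v]

lemma le_dist_of_triangle {f : V → V → ℕ} (hf_self : ∀ v, f v v = 0)
    (hf_triangle : ∀ u v w, f u w ≤ f u v + f v w) (hf_adj : ∀ u v, G.Adj u v → f u v ≤ 1)
    {u v : V} (h : G.Reachable u v) : f u v ≤ G.dist u v := by
  obtain ⟨p, hp⟩ := h.exists_walk_length_eq_dist
  rw [← hp]
  clear hp h
  induction p with
  | nil => simp [hf_self]
  | @cons u w v hadj p ih =>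
    calc f u v ≤ f u w + f w v := hf_triangle u w v
      _ ≤ 1 + p.length := add_le_add (hf_adj u w hadj) ih
      _ = (Walk.cons hadj p).length := by rw [Walk.length_cons, add_comm]

lemma cliqueNum_top [Fintype V] : (⊤ : SimpleGraph V).cliqueNum = Fintype.card V := by
  obtain ⟨s, hs⟩ := (⊤ : SimpleGraph V).exists_isNClique_cliqueNum
  refine le_antisymm (hs.card_eq ▸ s.card_le_univ) ?_
  have huniv : (⊤ : SimpleGraph V).IsClique (Finset.univ : Finset V) := by
    rw [Finset.coe_univ, isClique_univ]
  exact huniv.card_le_cliqueNum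

end SimpleGraph

namespace sunletGraph

open SimpleGraph ZMod Sum

variable {n : ℕ}

def pos : ZMod n ⊕ ZMod n → ZMod n := Sum.elim id id

def depth : ZMod n ⊕ ZMod n → ℕ := Sum.elim (fun _ => 0) (fun _ => 1)

@[simp] lemma pos_inl (i : ZMod n) : pos (inl i) = i := rfl
@[simp] lemma pos_inr (i : ZMod n) : pos (inr i) = i := rfl
@[simp] lemma depth_inl (i : ZMod n) : depth (inl i) = 0 := rfl
@[simp] lemma depth_inr (i : ZMod n) : depth (inr i) = 1 := rfl

lemma depth_le_one (u : ZMod n ⊕ ZMod n) : depth u ≤ 1 := by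
  cases u <;> simp

-- without the `if`, `w_i` would be at distance `2` from itself
def sunletDist (u v : ZMod n ⊕ ZMod n) : ℕ :=
  if u = v then 0 else cycleDist (pos u) (pos v) + depth u + depth v

lemma sunletDist_of_ne {u v : ZMod n ⊕ ZMod n} (h : u ≠ v) :
    sunletDist u v = cycleDist (pos u) (pos v) + depth u + depth v :=
  if_neg h

lemma sunletDist_triangle (u v w : ZMod n ⊕ ZMod n) :
    sunletDist u w ≤ sunletDist u v + sunletDist v w := by
  have := cycleDist_triangle (pos u) (pos v) (pos w)
  unfold sunletDist
  split_ifs <;> subst_vars <;> simp_all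
  omega

lemma sunletDist_le_one_of_adj [NeZero n] {u v : ZMod n ⊕ ZMod n}
    (h : (sunletGraph n).Adj u v) : sunletDist u v ≤ 1 := by
  obtain ⟨hne, hrel | hrel⟩ := (fromRel_adj _ _ _).mp h <;>
    rcases u with i | i <;> rcases v with j | j <;> simp only at hrel <;> subst hrel <;>
    simp [sunletDist, hne, cycleDist_self_add_one_le]
  rw [cycleDist_comm]
  exact cycleDist_self_add_one_le _

lemma adj_inr_inl (i : ZMod n) : (sunletGraph n).Adj (inr i) (inl i) := by
  simp [sunletGraph]

lemma dist_inl_pos_le (u : ZMod n ⊕ ZMod n) :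
    (sunletGraph n).dist u (inl (pos u)) ≤ depth u := by
  rcases u with i | i
  · simp
  · exact (dist_eq_one_iff_adj.mpr (adj_inr_inl i)).le

/-- `v_0, …, v_r` together with `w_1, …, w_{r-1}`. -/
def arcClique (r : ℕ) : Finset (ZMod n ⊕ ZMod n) :=
  (Finset.range (r + 1)).image (fun a : ℕ => inl (a : ZMod n)) ∪
    (Finset.Ioo 0 r).image (fun a : ℕ => inr (a : ZMod n))

theorem card_arcClique {r : ℕ} (hr : 1 ≤ r) (hrn : r < n) :
    (arcClique (n := n) r).card = 2 * r := by
  have hinj : Set.InjOn (Nat.cast : ℕ → ZMod n) (Set.Iio n) := fun a ha b hb h => by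
    rwa [natCast_eq_natCast_iff', Nat.mod_eq_of_lt ha, Nat.mod_eq_of_lt hb] at h
  rw [arcClique, Finset.card_union_of_disjoint (by simp [Finset.disjoint_left]),
    Finset.card_image_of_injOn, Finset.card_image_of_injOn, Finset.card_range, Nat.card_Ioo]
  · omega
  · exact (inr_injective.comp_injOn hinj).mono fun a ha => by simp at ha ⊢; omega
  · exact (inl_injective.comp_injOn hinj).mono fun a ha => by simp at ha ⊢; omega

section

variable [Fact (1 < n)]

lemma adj_inl_add_one (i : ZMod n) : (sunletGraph n).Adj (inl i) (inl (i + 1)) := by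
  simp [sunletGraph]

lemma exists_walk_inl_add_natCast (i : ZMod n) (m : ℕ) :
    ∃ p : (sunletGraph n).Walk (inl i) (inl (i + m)), p.length = m := by
  induction m with
  | zero => exact ⟨Walk.nil.copy rfl (by simp), by simp⟩
  | succ m ih =>
    obtain ⟨p, hp⟩ := ih
    exact ⟨(p.concat (adj_inl_add_one _)).copy rfl (by push_cast; ring_nf), by simp [hp]⟩

lemma connected : (sunletGraph n).Connected := by
  have hreach_inl (i : ZMod n) : (sunletGraph n).Reachable (inl 0) (inl i) := by
    obtain ⟨p, -⟩ := exists_walk_inl_add_natCast (0 : ZMod n) i.val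
    exact ⟨p.copy rfl (by simp)⟩
  have hreach : ∀ u, (sunletGraph n).Reachable (inl 0) u := by
    rintro (i | i)
    · exact hreach_inl i
    · exact (hreach_inl i).trans (adj_inr_inl i).reachable.symm
  exact Connected.mk fun u v => (hreach u).symm.trans (hreach v)

lemma dist_inl_inl_le (i j : ZMod n) : (sunletGraph n).dist (inl i) (inl j) ≤ cycleDist i j := by
  have hwalk (a : ZMod n) (m : ℕ) : (sunletGraph n).dist (inl a) (inl (a + m)) ≤ m := by
    obtain ⟨p, hp⟩ := exists_walk_inl_add_natCast a m
    exact (dist_le p).trans_eq hp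
  have hj : j = i + (j - i).valMinAbs := by rw [coe_valMinAbs]; ring
  rw [cycleDist]
  obtain ⟨m, hm | hm⟩ := Int.eq_nat_or_neg (j - i).valMinAbs <;> rw [hm] at hj ⊢ <;>
    simp only [Int.cast_natCast, Int.cast_neg, Int.natAbs_neg, Int.natAbs_natCast] at hj ⊢
  · exact hj ▸ hwalk i m
  · rw [SimpleGraph.dist_comm, show i = j + m by rw [hj]; ring]
    exact hwalk j m

theorem dist_eq (u v : ZMod n ⊕ ZMod n) : (sunletGraph n).dist u v = sunletDist u v := by
  refine le_antisymm ?_ (le_dist_of_triangle (by simp [sunletDist]) sunletDist_triangle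
    (fun _ _ => sunletDist_le_one_of_adj) (connected.preconnected u v))
  rcases eq_or_ne u v with rfl | huv
  · simp
  calc (sunletGraph n).dist u v
      ≤ (sunletGraph n).dist u (inl (pos u)) + ((sunletGraph n).dist (inl (pos u)) (inl (pos v))
        + (sunletGraph n).dist (inl (pos v)) v) :=
        connected.dist_triangle.trans (by gcongr; exact connected.dist_triangle)
    _ ≤ depth u + (cycleDist (pos u) (pos v) + depth v) := by
        gcongr
        · exact dist_inl_pos_le u
        · exact dist_inl_inl_le _ _
        · exact SimpleGraph.dist_comm.trans_le (dist_inl_pos_le v)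
    _ = sunletDist u v := by rw [sunletDist, if_neg huv]; ring

lemma power_adj {r : ℕ} {u v : ZMod n ⊕ ZMod n} :
    ((sunletGraph n).power r).Adj u v ↔ u ≠ v ∧ sunletDist u v ≤ r := by
  rw [connected.power_adj, dist_eq]

theorem power_eq_top {r : ℕ} (hr : n / 2 + 2 ≤ r) : (sunletGraph n).power r = ⊤ := by
  ext u v
  rw [power_adj, top_adj, and_iff_left_iff_imp]
  intro huv
  have := cycleDist_le_half (pos u) (pos v)
  have := depth_le_one u
  have := depth_le_one v
  rw [sunletDist_of_ne huv]
  omega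

theorem card_le_of_isClique_power {r : ℕ} (hr : 1 ≤ r) (hrn : 2 * r + 2 ≤ n)
    {s : Finset (ZMod n ⊕ ZMod n)} (hs : ((sunletGraph n).power r).IsClique s) :
    s.card ≤ 2 * r := by
  have hdist : ∀ u ∈ s, ∀ v ∈ s, u ≠ v → cycleDist (pos u) (pos v) + depth u + depth v ≤ r :=
    fun u hu v hv huv => sunletDist_of_ne huv ▸ (power_adj.mp (hs hu hv huv)).2
  have hcycle : s.toLeft.card ≤ r + 1 :=
    card_le_of_pairwise_cycleDist_le hrn fun i hi j hj hij => by
      simpa using hdist _ (Finset.mem_toLeft.mp hi) _ (Finset.mem_toLeft.mp hj) (by simpa)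
  have hpendant : s.toRight.card ≤ r - 2 + 1 :=
    card_le_of_pairwise_cycleDist_le (by omega) fun i hi j hj hij => by
      have := hdist _ (Finset.mem_toRight.mp hi) _ (Finset.mem_toRight.mp hj) (by simpa)
      simp only [pos_inr, depth_inr] at this
      omega
  rw [← Finset.card_toLeft_add_card_toRight]
  rcases s.toRight.eq_empty_or_nonempty with hempty | ⟨j, hj⟩
  · rw [hempty, Finset.card_empty]
    omega
  obtain hr | rfl : 2 ≤ r ∨ r = 1 := by omega
  · omega
  -- for `r = 1` the two bounds only give `3`, but a pendant `w_j` excludes every `v_i` with `i ≠ j`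
  have hleft_sub : s.toLeft ⊆ {j} := fun i hi => by
    have := hdist _ (Finset.mem_toLeft.mp hi) _ (Finset.mem_toRight.mp hj) (by simp)
    simp only [pos_inl, pos_inr, depth_inl, depth_inr] at this
    exact Finset.mem_singleton.mpr (cycleDist_eq_zero.mp (by omega))
  have := Finset.card_le_card hleft_sub
  simp only [Finset.card_singleton] at this
  omega

theorem isClique_power_arcClique (r : ℕ) :
    ((sunletGraph n).power r).IsClique (arcClique (n := n) r) := by
  have hcycle (a b : ℕ) : cycleDist (a : ZMod n) b ≤ ((b : ℤ) - a).natAbs :=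
    cycleDist_le_natAbs (by push_cast; ring)
  intro u hu v hv huv
  rw [power_adj, sunletDist_of_ne huv]
  refine ⟨huv, ?_⟩
  simp only [arcClique, Finset.coe_union, Finset.coe_image, Set.mem_union, Set.mem_image,
    Finset.mem_coe, Finset.mem_range, Finset.mem_Ioo] at hu hv
  rcases hu with ⟨a, ha, rfl⟩ | ⟨a, ha, rfl⟩ <;> rcases hv with ⟨b, hb, rfl⟩ | ⟨b, hb, rfl⟩ <;>
    have := hcycle a b <;> simp only [pos_inl, pos_inr, depth_inl, depth_inr] <;> omega

end

end sunletGraph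

/-- For the `n`-sunlet graph `G` (`n ≥ 4`): for `1 ≤ r < ⌊n/2⌋` the clique number
of `G^r` is `2r`, and for every `r ≥ ⌊n/2⌋ + 2` the power `G^r` is the complete
graph on the `2n` vertices, so its clique number is `2n`. -/
theorem cliqueNum_power_sunletGraph (n : ℕ) (hn : 4 ≤ n) :
    (∀ r : ℕ, 1 ≤ r → r < n / 2 → ((sunletGraph n).power r).cliqueNum = 2 * r) ∧
      (∀ r : ℕ, n / 2 + 2 ≤ r →
        (sunletGraph n).power r = ⊤ ∧ ((sunletGraph n).power r).cliqueNum = 2 * n) := by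
  have : Fact (1 < n) := ⟨by omega⟩
  refine ⟨fun r hr hrn => ?_, fun r hr => ⟨sunletGraph.power_eq_top hr, ?_⟩⟩
  · obtain ⟨s, hs⟩ := ((sunletGraph n).power r).exists_isNClique_cliqueNum
    refine le_antisymm ?_ ?_
    · exact hs.card_eq ▸ sunletGraph.card_le_of_isClique_power hr (by omega) hs.isClique
    · exact sunletGraph.card_arcClique (n := n) hr (by omega) ▸
        (sunletGraph.isClique_power_arcClique r).card_le_cliqueNum
  · rw [sunletGraph.power_eq_top hr, SimpleGraph.cliqueNum_top, Fintype.card_sum, ZMod.card,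
      two_mul]
end
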